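/- Let Γ₀ be a maximally Log-consistent set, M^c the canonical model for Γ₀, Δ ∈ [Γ₀]_⊞, and φ ∈ L_CPL. Then I φ̄ ∈ Δ if and only if Var(φ) ⊆ f^c(Δ), where f^c(Δ) = {p ∈ Prop : I p̄ ∈ Δ}. -/

import Mathlib

/-- Formulas of classical propositional logic `L_CPL` over a countable set
of atomic propositions (represented by natural numbers). -/
inductive CPL : Type
  | top : CPL
  | atom : ℕ → CPL
  | neg : CPL → CPL
  | or : CPL → CPL → CPL
  | and : CPL → CPL → CPL
  deriving DecidableEq
/-- `Var(φ)`: the (finite) set of atomic propositions occurring in `φ`. -/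
def CPL.var : CPL → Finset ℕ
  | .top => ∅
  | .atom p => {p}
  | .neg φ => φ.var
  | .or φ ψ => φ.var ∪ ψ.var
  | .and φ ψ => φ.var ∪ ψ.var

/-- `p̄ := p ∨ ¬p`. -/
def pbar (p : ℕ) : CPL := .or (.atom p) (.neg (.atom p))

/-- Conjunction of a list of `L_CPL` formulas (empty conjunction is `⊤`). -/
def conjList : List CPL → CPL
  | [] => .top
  | [α] => α
  | α :: β :: rest => .and α (conjList (β :: rest))

/-- `φ̄ := ⋀_{p ∈ Var(φ)} (p ∨ ¬p)`, with the conjuncts taken in the fixed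
(increasing) enumeration order of the atomic propositions. -/
def CPL.bar (φ : CPL) : CPL := conjList ((φ.var.sort (· ≤ ·)).map pbar)
/-- Formulas of the language `L_Int`, extending `L_CPL` (embedded via `of`) by
negation, disjunction, conjunction, the global modality `⊞` (`box`) and the
intention modality `I` (`int`), which applies only to `L_CPL` formulas. -/
inductive Form : Type
  | of : CPL → Form
  | neg : Form → Form
  | or : Form → Form → Form
  | and : Form → Form → Form
  | box : Form → Form
  | int : CPL → Form
  deriving DecidableEq
/-- Material implication in `L_Int`: `φ → ψ := ¬φ ∨ ψ`. -/
def Form.imp (φ ψ : Form) : Form := .or (.neg φ) ψ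

/-- Material biconditional in `L_Int`: `φ ↔ ψ := (φ → ψ) ∧ (ψ → φ)`. -/
def Form.iff (φ ψ : Form) : Form := .and (φ.imp ψ) (ψ.imp φ)

/-- `⊥ := ¬⊤`. -/
def Form.bot : Form := .neg (.of .top)

/-- Boolean evaluation of `L_CPL` formulas under a valuation of the atoms. -/
def CPL.eval (v : ℕ → Bool) : CPL → Bool
  | .top => true
  | .atom p => v p
  | .neg φ => !φ.eval v
  | .or φ ψ => φ.eval v || ψ.eval v
  | .and φ ψ => φ.eval v && ψ.eval v

/-- Boolean evaluation of `L_Int` formulas, treating `⊞`- and `I`-formulas as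
atoms (evaluated by `u`). -/
def Form.eval (v : ℕ → Bool) (u : Form → Bool) : Form → Bool
  | .of α => α.eval v
  | .neg φ => !φ.eval v u
  | .or φ ψ => φ.eval v u || ψ.eval v u
  | .and φ ψ => φ.eval v u && ψ.eval v u
  | .box φ => u (.box φ)
  | .int α => u (.int α)

/-- Classical propositional tautologies of `L_Int` (with modal formulas
treated as atoms). -/
def Taut (φ : Form) : Prop := ∀ v u, φ.eval v u = true

/-- Derivability in the proof system `Log`: classical tautologies and Modus
Ponens; `S5` axioms and necessitation for `⊞`; and the intention axioms
Ax1: `I⊤`; Ax2: `Iφ → Iφ̄`; Ax3: `Iφ → ¬I¬φ`; Ax4: `(Iφ ∧ Iψ) ↔ I(φ ∧ ψ)`;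
Ax5: `⊞(ψ → φ) → ((Iψ ∧ Iφ̄) → Iφ)`. -/
inductive Deriv : Set Form → Form → Prop
  | prem {Γ : Set Form} {φ : Form} : φ ∈ Γ → Deriv Γ φ
  | taut {Γ : Set Form} {φ : Form} : Taut φ → Deriv Γ φ
  | mp {Γ : Set Form} {φ ψ : Form} :
      Deriv Γ (φ.imp ψ) → Deriv Γ φ → Deriv Γ ψ
  | boxK {Γ : Set Form} (φ ψ : Form) :
      Deriv Γ ((Form.box (φ.imp ψ)).imp ((Form.box φ).imp (Form.box ψ)))
  | boxT {Γ : Set Form} (φ : Form) : Deriv Γ ((Form.box φ).imp φ)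
  | box5 {Γ : Set Form} (φ : Form) :
      Deriv Γ ((Form.neg (Form.box φ)).imp (Form.box (Form.neg (Form.box φ))))
  | nec {Γ : Set Form} {φ : Form} : Deriv ∅ φ → Deriv Γ (Form.box φ)
  | ax1 {Γ : Set Form} : Deriv Γ (Form.int .top)
  | ax2 {Γ : Set Form} (α : CPL) :
      Deriv Γ ((Form.int α).imp (Form.int α.bar))
  | ax3 {Γ : Set Form} (α : CPL) :
      Deriv Γ ((Form.int α).imp (Form.neg (Form.int (CPL.neg α))))
  | ax4 {Γ : Set Form} (α β : CPL) :
      Deriv Γ ((Form.and (.int α) (.int β)).iff (Form.int (.and α β)))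
  | ax5 {Γ : Set Form} (α β : CPL) :
      Deriv Γ ((Form.box ((Form.of β).imp (Form.of α))).imp
        ((Form.and (.int β) (.int α.bar)).imp (Form.int α)))

/-- A set of formulas is `Log`-consistent if `⊥` is not derivable from it. -/
def LogConsistent (Γ : Set Form) : Prop := ¬ Deriv Γ Form.bot

/-- A maximally `Log`-consistent set: consistent with no proper consistent
extension. -/
def MCS (Γ : Set Form) : Prop :=
  LogConsistent Γ ∧ ∀ Δ, LogConsistent Δ → Γ ⊆ Δ → Δ = Γ
/-- `Γ[⊞] = {φ : ⊞φ ∈ Γ}`. -/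
def boxSet (Γ : Set Form) : Set Form := {φ | Form.box φ ∈ Γ}

/-- `Γ[I] = {φ ∈ L_Int : Iψ ∧ ⊞(ψ → φ) ∈ Γ for some ψ ∈ L_CPL}`. -/
def intSet (Γ : Set Form) : Set Form :=
  {φ | ∃ ψ : CPL, Form.and (Form.int ψ) (Form.box ((Form.of ψ).imp φ)) ∈ Γ}
/-- `[Γ₀]_⊞`: the `∼⊞`-equivalence class of `Γ₀`, i.e. the maximally
`Log`-consistent sets `Δ` with `Γ₀[⊞] ⊆ Δ`. -/
def canonDomain (Γ₀ : Set Form) : Set (Set Form) :=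
  {Δ | MCS Δ ∧ boxSet Γ₀ ⊆ Δ}

/-- `f^c(Δ) = {p ∈ Prop : Ip̄ ∈ Δ}`. -/
def fC (Δ : Set Form) : Set ℕ := {p | Form.int (pbar p) ∈ Δ}

/-! Ax4 makes `I` commute with conjunction inside a maximally consistent set, and Ax1 puts the
empty conjunction `I⊤` in every such set. Since `φ̄` is the conjunction of the `p̄` for
`p ∈ Var(φ)`, membership of `Iφ̄` splits into the memberships of the `Ip̄`. -/

theorem Deriv.cut {Γ : Set Form} {φ ψ : Form} (hφ : Deriv Γ φ)
    (hψ : Deriv (insert φ Γ) ψ) : Deriv Γ ψ := by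
  generalize hS : insert φ Γ = S at hψ
  induction hψ with
  | prem h =>
      subst hS
      rcases h with rfl | h
      · exact hφ
      · exact .prem h
  | taut h => exact .taut h
  | mp _ _ ih₁ ih₂ => exact .mp (ih₁ hS) (ih₂ hS)
  | boxK α β => exact .boxK α β
  | boxT α => exact .boxT α
  | box5 α => exact .box5 α
  | nec h => exact .nec h
  | ax1 => exact .ax1
  | ax2 α => exact .ax2 α
  | ax3 α => exact .ax3 α
  | ax4 α β => exact .ax4 α β
  | ax5 α β => exact .ax5 α β

namespace MCS

variable {Γ : Set Form}

theorem mem_of_deriv (hΓ : MCS Γ) {φ : Form} (h : Deriv Γ φ) : φ ∈ Γ := by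
  have hcons : LogConsistent (insert φ Γ) := fun hbot => hΓ.1 (h.cut hbot)
  rw [← hΓ.2 _ hcons (Set.subset_insert φ Γ)]
  exact Set.mem_insert φ Γ

theorem mem_of_imp_mem (hΓ : MCS Γ) {φ ψ : Form} (himp : φ.imp ψ ∈ Γ) (hφ : φ ∈ Γ) :
    ψ ∈ Γ :=
  hΓ.mem_of_deriv (.mp (.prem himp) (.prem hφ))

theorem and_mem_iff (hΓ : MCS Γ) {φ ψ : Form} :
    Form.and φ ψ ∈ Γ ↔ φ ∈ Γ ∧ ψ ∈ Γ := by
  have taut_left : Taut ((Form.and φ ψ).imp φ) := by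
    intro v u
    simp only [Form.imp, Form.eval]
    cases φ.eval v u <;> cases ψ.eval v u <;> rfl
  have taut_right : Taut ((Form.and φ ψ).imp ψ) := by
    intro v u
    simp only [Form.imp, Form.eval]
    cases φ.eval v u <;> cases ψ.eval v u <;> rfl
  have taut_intro : Taut (φ.imp (ψ.imp (Form.and φ ψ))) := by
    intro v u
    simp only [Form.imp, Form.eval]
    cases φ.eval v u <;> cases ψ.eval v u <;> rfl
  refine ⟨fun h => ⟨?_, ?_⟩, fun ⟨hφ, hψ⟩ => ?_⟩
  · exact hΓ.mem_of_deriv (.mp (.taut taut_left) (.prem h))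
  · exact hΓ.mem_of_deriv (.mp (.taut taut_right) (.prem h))
  · exact hΓ.mem_of_deriv (.mp (.mp (.taut taut_intro) (.prem hφ)) (.prem hψ))

theorem mem_iff_of_deriv_iff (hΓ : MCS Γ) {φ ψ : Form} (h : Deriv Γ (φ.iff ψ)) :
    φ ∈ Γ ↔ ψ ∈ Γ := by
  obtain ⟨hφψ, hψφ⟩ := hΓ.and_mem_iff.mp (hΓ.mem_of_deriv h)
  exact ⟨hΓ.mem_of_imp_mem hφψ, hΓ.mem_of_imp_mem hψφ⟩

theorem int_and_mem_iff (hΓ : MCS Γ) {α β : CPL} :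
    Form.int (.and α β) ∈ Γ ↔ Form.int α ∈ Γ ∧ Form.int β ∈ Γ :=
  (hΓ.mem_iff_of_deriv_iff (.ax4 α β)).symm.trans hΓ.and_mem_iff

theorem int_conjList_mem_iff (hΓ : MCS Γ) (l : List CPL) :
    Form.int (conjList l) ∈ Γ ↔ ∀ α ∈ l, Form.int α ∈ Γ := by
  match l with
  | [] => simpa [conjList] using hΓ.mem_of_deriv .ax1
  | [α] => simp [conjList]
  | α :: β :: rest =>
      rw [conjList, hΓ.int_and_mem_iff, hΓ.int_conjList_mem_iff (β :: rest),
        List.forall_mem_cons (l := β :: rest)]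

end MCS

theorem int_bar_iff_var_subset_fC_general (Γ₀ Δ : Set Form)
    (hΔ : Δ ∈ canonDomain Γ₀) (φ : CPL) :
    Form.int φ.bar ∈ Δ ↔ ∀ p ∈ φ.var, p ∈ fC Δ := by
  rw [CPL.bar, hΔ.1.int_conjList_mem_iff, List.forall_mem_map]
  simp only [Finset.mem_sort, fC, Set.mem_ofPred_eq]

/-- Let `Γ₀` be maximally `Log`-consistent, `Δ ∈ [Γ₀]_⊞` and
`φ ∈ L_CPL`. Then `Iφ̄ ∈ Δ` iff `Var(φ) ⊆ f^c(Δ)`. -/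
theorem int_bar_iff_var_subset_fC (Γ₀ Δ : Set Form) (hΓ₀ : MCS Γ₀)
    (hΔ : Δ ∈ canonDomain Γ₀) (φ : CPL) :
    Form.int φ.bar ∈ Δ ↔ ∀ p ∈ φ.var, p ∈ fC Δ :=
  int_bar_iff_var_subset_fC_general Γ₀ Δ hΔ φ
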